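/- In the untyped λ-calculus, the leftmost-outermost (normal order) β-reduction strategy is normalizing: if a term M has a β-normal form, then the leftmost-outermost reduction sequence starting from M terminates in that normal form. -/

import Mathlib

/-- Untyped λ-terms with de Bruijn indices (so α-equivalence is equality). -/
inductive Lam : Type
  | var : ℕ → Lam
  | app : Lam → Lam → Lam
  | lam : Lam → Lam
deriving DecidableEq, Repr

namespace Lam

/-- Lift (shift) free variables ≥ `d` by one. -/
def lift (d : ℕ) : Lam → Lam
  | var n => if n < d then var n else var (n + 1)
  | app s t => app (lift d s) (lift d t)
  | lam t => lam (lift (d + 1) t)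

/-- Substitute `u` for the variable with index `d`. -/
def subst (d : ℕ) (u : Lam) : Lam → Lam
  | var n => if n = d then u else if n < d then var n else var (n - 1)
  | app s t => app (subst d u s) (subst d u t)
  | lam t => lam (subst (d + 1) (lift 0 u) t)

/-- One-step β-reduction. -/
inductive Beta : Lam → Lam → Prop
  | beta (t u : Lam) : Beta (app (lam t) u) (subst 0 u t)
  | appL {s s' : Lam} (t : Lam) : Beta s s' → Beta (app s t) (app s' t)
  | appR (s : Lam) {t t' : Lam} : Beta t t' → Beta (app s t) (app s t')
  | abs {t t' : Lam} : Beta t t' → Beta (lam t) (lam t')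

/-- One-step η-reduction. -/
inductive Eta : Lam → Lam → Prop
  | eta (t : Lam) : Eta (lam (app (lift 0 t) (var 0))) t
  | appL {s s' : Lam} (t : Lam) : Eta s s' → Eta (app s t) (app s' t)
  | appR (s : Lam) {t t' : Lam} : Eta t t' → Eta (app s t) (app s t')
  | abs {t t' : Lam} : Eta t t' → Eta (lam t) (lam t')

/-- One-step βη-reduction. -/
def BetaEta (s t : Lam) : Prop := Beta s t ∨ Eta s t

/-- Multi-step β-reduction. -/
def BetaStar : Lam → Lam → Prop := Relation.ReflTransGen Beta

/-- Multi-step βη-reduction. -/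
def BetaEtaStar : Lam → Lam → Prop := Relation.ReflTransGen BetaEta

/-- β-conversion. -/
def BetaConv : Lam → Lam → Prop := Relation.EqvGen Beta

/-- βη-conversion. -/
def BetaEtaConv : Lam → Lam → Prop := Relation.EqvGen BetaEta

/-- All free variables have index < `d`. -/
def ClosedUnder : ℕ → Lam → Prop
  | d, var n => n < d
  | d, app s t => ClosedUnder d s ∧ ClosedUnder d t
  | d, lam t => ClosedUnder (d + 1) t

/-- A term is closed if it has no free variables. -/
def Closed (t : Lam) : Prop := ClosedUnder 0 t

/-- β-normal form. -/
def BetaNF (t : Lam) : Prop := ∀ u, ¬ Beta t u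

/-- βη-normal form. -/
def BetaEtaNF (t : Lam) : Prop := ∀ u, ¬ BetaEta t u

end Lam

open Lam

/-- One step of the leftmost-outermost (normal order) β-reduction strategy. -/
inductive Lmo : Lam → Lam → Prop
  | head (t u : Lam) : Lmo (Lam.app (Lam.lam t) u) (Lam.subst 0 u t)
  | appL {s s' : Lam} (t : Lam) : (∀ t', s ≠ Lam.lam t') → Lmo s s' →
      Lmo (Lam.app s t) (Lam.app s' t)
  | appR (s : Lam) {t t' : Lam} : (∀ t', s ≠ Lam.lam t') → (∀ s', ¬ Beta s s') →
      Lmo t t' → Lmo (Lam.app s t) (Lam.app s t')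
  | abs {t t' : Lam} : Lmo t t' → Lmo (Lam.lam t) (Lam.lam t')

/-!
Kashima's proof of standardization. Standard reductions are reflexive and closed under lifting and
substitution. Hence a β-step appended to a standard reduction is absorbed (a redex at the root of
the target is pushed into the weak head reduction), so every β-reduction is standard. A standard
reduction to a normal form is leftmost-outermost: weak head steps are, and in an application
`A' B'` of the normal form the function part is a normal non-abstraction, so once `A` has reached
`A'` the strategy moves on to the argument.
-/

namespace Lam

theorem lift_lift (t : Lam) {i j : ℕ} (h : i ≤ j) :
    lift i (lift j t) = lift (j + 1) (lift i t) := by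
  induction t generalizing i j with
  | var n => grind [lift]
  | app s t ihs iht => simp only [lift, ihs h, iht h]
  | lam t ih => simp only [lift, ih (Nat.succ_le_succ h)]

theorem lift_subst_of_le (t u : Lam) {i j : ℕ} (h : i ≤ j) :
    lift i (subst j u t) = subst (j + 1) (lift i u) (lift i t) := by
  induction t generalizing i j u with
  | var n => grind [lift, subst]
  | app s t ihs iht => simp only [lift, subst, ihs u h, iht u h]
  | lam t ih =>
    simp only [lift, subst, ih _ (Nat.succ_le_succ h), lift_lift u (Nat.zero_le i)]

theorem lift_subst_of_ge (t u : Lam) {i j : ℕ} (h : j ≤ i) :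
    lift i (subst j u t) = subst j (lift i u) (lift (i + 1) t) := by
  induction t generalizing i j u with
  | var n => grind [lift, subst]
  | app s t ihs iht => simp only [lift, subst, ihs u h, iht u h]
  | lam t ih =>
    simp only [lift, subst, ih _ (Nat.succ_le_succ h), lift_lift u (Nat.zero_le i)]

theorem subst_lift (t u : Lam) (d : ℕ) : subst d u (lift d t) = t := by
  induction t generalizing d u with
  | var n => grind [lift, subst]
  | app s t ihs iht => simp only [lift, subst, ihs, iht]
  | lam t ih => simp only [lift, subst, ih]

theorem subst_subst (t u v : Lam) {i j : ℕ} (h : i ≤ j) :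
    subst j u (subst i v t) = subst i (subst j u v) (subst (j + 1) (lift i u) t) := by
  induction t generalizing i j u v with
  | var n => grind [subst, subst_lift]
  | app s t ihs iht => simp only [subst, ihs u v h, iht u v h]
  | lam t ih =>
    simp only [subst, ih _ _ (Nat.succ_le_succ h), lift_subst_of_le v u (Nat.zero_le j),
      lift_lift u (Nat.zero_le i)]

inductive WeakHeadStep : Lam → Lam → Prop
  | beta (t u : Lam) : WeakHeadStep (app (lam t) u) (subst 0 u t)
  | appL {s s' : Lam} (t : Lam) : WeakHeadStep s s' → WeakHeadStep (app s t) (app s' t)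

abbrev WeakHeadRed : Lam → Lam → Prop := Relation.ReflTransGen WeakHeadStep

theorem WeakHeadStep.subst {M M' : Lam} (h : WeakHeadStep M M') (d : ℕ) (u : Lam) :
    WeakHeadStep (subst d u M) (subst d u M') := by
  induction h with
  | beta t v =>
    rw [Lam.subst, Lam.subst, subst_subst t u v (Nat.zero_le d)]
    exact .beta _ _
  | appL t _ ih => exact .appL _ ih

theorem WeakHeadStep.lift {M M' : Lam} (h : WeakHeadStep M M') (d : ℕ) :
    WeakHeadStep (lift d M) (lift d M') := by
  induction h with
  | beta t v =>
    rw [Lam.lift, Lam.lift, lift_subst_of_ge t v (Nat.zero_le d)]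
    exact .beta _ _
  | appL t _ ih => exact .appL _ ih

theorem WeakHeadRed.subst {M M' : Lam} (h : WeakHeadRed M M') (d : ℕ) (u : Lam) :
    WeakHeadRed (subst d u M) (subst d u M') :=
  Relation.ReflTransGen.lift (Lam.subst d u) (fun _ _ hab => hab.subst d u) _ _ h

theorem WeakHeadRed.lift {M M' : Lam} (h : WeakHeadRed M M') (d : ℕ) :
    WeakHeadRed (lift d M) (lift d M') :=
  Relation.ReflTransGen.lift (Lam.lift d) (fun _ _ hab => hab.lift d) _ _ h

theorem WeakHeadRed.app_left {M M' : Lam} (h : WeakHeadRed M M') (N : Lam) :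
    WeakHeadRed (app M N) (app M' N) :=
  Relation.ReflTransGen.lift (app · N) (fun _ _ => .appL N) _ _ h

/-- Kashima's inductive presentation of standard reduction: weak head reduction to a term with
the outermost constructor of the target, followed by standard reductions of the immediate
subterms. -/
inductive Standard : Lam → Lam → Prop
  | var {M : Lam} {n : ℕ} : WeakHeadRed M (var n) → Standard M (var n)
  | lam {M A A' : Lam} : WeakHeadRed M (lam A) → Standard A A' → Standard M (lam A')
  | app {M A B A' B' : Lam} : WeakHeadRed M (app A B) → Standard A A' → Standard B B' →
      Standard M (app A' B')

namespace Standard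

theorem of_weakHeadRed {M N P : Lam} (h : WeakHeadRed M N) (h' : Standard N P) :
    Standard M P := by
  cases h' with
  | var hN => exact .var (h.trans hN)
  | lam hN hA => exact .lam (h.trans hN) hA
  | app hN hA hB => exact .app (h.trans hN) hA hB

theorem refl (M : Lam) : Standard M M := by
  induction M with
  | var n => exact .var .refl
  | app s t ihs iht => exact .app .refl ihs iht
  | lam t ih => exact .lam .refl ih

theorem lift {M M' : Lam} (h : Standard M M') (d : ℕ) : Standard (lift d M) (lift d M') := by
  induction h generalizing d with
  | var h => exact of_weakHeadRed (h.lift d) (refl _)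
  | lam h _ ih => exact .lam (h.lift d) (ih (d + 1))
  | app h _ _ ihA ihB => exact .app (h.lift d) (ihA d) (ihB d)

theorem subst {M M' N N' : Lam} (hM : Standard M M') (hN : Standard N N') (d : ℕ) :
    Standard (Lam.subst d N M) (Lam.subst d N' M') := by
  induction hM generalizing d N N' with
  | @var _ n h =>
    refine of_weakHeadRed (h.subst d N) ?_
    by_cases hnd : n = d
    · simpa only [Lam.subst, if_pos hnd] using hN
    · simp only [Lam.subst, if_neg hnd]
      exact refl _
  | lam h _ ih => exact .lam (h.subst d N) (ih (hN.lift 0) (d + 1))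
  | app h _ _ ihA ihB => exact .app (h.subst d N) (ihA hN d) (ihB hN d)

theorem tail_beta {M N N' : Lam} (h : Standard M N) (hb : Beta N N') : Standard M N' := by
  induction h generalizing N' with
  | var _ => cases hb
  | lam h _ ih =>
    cases hb with
    | abs hb => exact .lam h (ih hb)
  | app h hA hB ihA ihB =>
    cases hb with
    | beta t u =>
      cases hA with
      | lam hA' hbody =>
        have hred : WeakHeadRed _ (Lam.subst 0 _ _) :=
          (h.trans (hA'.app_left _)).tail (.beta _ _)
        exact of_weakHeadRed hred (hbody.subst hB 0)
    | appL t hb => exact .app h (ihA hb) hB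
    | appR s hb => exact .app h hA (ihB hb)

theorem of_betaStar {M N : Lam} (h : BetaStar M N) : Standard M N := by
  induction h with
  | refl => exact refl M
  | tail _ hb ih => exact ih.tail_beta hb

end Standard

theorem BetaNF.of_lam {t : Lam} (h : BetaNF (lam t)) : BetaNF t :=
  fun u hu => h (lam u) (.abs hu)

theorem BetaNF.of_app {s t : Lam} (h : BetaNF (app s t)) :
    (∀ t', s ≠ lam t') ∧ BetaNF s ∧ BetaNF t :=
  ⟨fun t' he => h _ (by rw [he]; exact .beta t' t), fun u hu => h _ (.appL t hu),
    fun u hu => h _ (.appR s hu)⟩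

end Lam

open Lam

namespace Lmo

theorem exists_eq_lam_of_reflTransGen {t u : Lam} (h : Relation.ReflTransGen Lmo (lam t) u) :
    ∃ t', u = lam t' := by
  induction h with
  | refl => exact ⟨t, rfl⟩
  | tail _ hstep ih =>
    obtain ⟨t', rfl⟩ := ih
    cases hstep
    exact ⟨_, rfl⟩

theorem of_weakHeadStep {M N : Lam} (h : WeakHeadStep M N) : Lmo M N := by
  induction h with
  | beta t u => exact .head t u
  | appL t hs ih => exact .appL t (fun t' he => by subst he; cases hs) ih

theorem reflTransGen_of_weakHeadRed {M N : Lam} (h : WeakHeadRed M N) :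
    Relation.ReflTransGen Lmo M N :=
  Relation.ReflTransGen.mono (fun _ _ => of_weakHeadStep) _ _ h

theorem reflTransGen_app_left {A A' : Lam} (h : Relation.ReflTransGen Lmo A A')
    (hA' : ∀ t, A' ≠ lam t) (B : Lam) :
    Relation.ReflTransGen Lmo (app A B) (app A' B) := by
  induction h using Relation.ReflTransGen.head_induction_on with
  | refl => rfl
  | head hstep hrest ih =>
    refine .head (.appL B ?_ hstep) ih
    rintro t rfl
    obtain ⟨t', rfl⟩ := exists_eq_lam_of_reflTransGen (.head hstep hrest)
    exact hA' t' rfl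

theorem reflTransGen_app_right {s B B' : Lam} (hs : ∀ t, s ≠ lam t) (hs' : BetaNF s)
    (h : Relation.ReflTransGen Lmo B B') :
    Relation.ReflTransGen Lmo (app s B) (app s B') :=
  Relation.ReflTransGen.lift (app s) (fun _ _ => .appR s hs hs') _ _ h

theorem reflTransGen_lam {B B' : Lam} (h : Relation.ReflTransGen Lmo B B') :
    Relation.ReflTransGen Lmo (lam B) (lam B') :=
  Relation.ReflTransGen.lift lam (fun _ _ => .abs) _ _ h

theorem reflTransGen_of_standard {M N : Lam} (h : Standard M N) (hN : BetaNF N) :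
    Relation.ReflTransGen Lmo M N := by
  induction h with
  | var h => exact reflTransGen_of_weakHeadRed h
  | lam h _ ih =>
    exact (reflTransGen_of_weakHeadRed h).trans (reflTransGen_lam (ih (BetaNF.of_lam hN)))
  | app h _ _ ihA ihB =>
    obtain ⟨hA_ne_lam, hA, hB⟩ := BetaNF.of_app hN
    exact (reflTransGen_of_weakHeadRed h).trans <|
      (reflTransGen_app_left (ihA hA) hA_ne_lam _).trans
        (reflTransGen_app_right hA_ne_lam hA (ihB hB))

end Lmo

/-- The leftmost-outermost strategy is normalizing: if `M` β-reduces to a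
β-normal form `N`, then the leftmost-outermost reduction sequence starting
from `M` terminates in `N`. -/
theorem leftmost_outermost_normalizing (M N : Lam)
    (h : BetaStar M N) (hN : BetaNF N) :
    Relation.ReflTransGen Lmo M N :=
  Lmo.reflTransGen_of_standard (Standard.of_betaStar h) hN
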